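/- Let (u,p) ∈ V × Q and suppose v_p ∈ V satisfies b(v_p, p) = |p|_B² and a(v_p, v_p) ≤ β₀⁻² |p|_B². Then the combined test pair (v,q) := (u + β₀²·v_p, −p) satisfies the lower bound 𝒜((u,p),(v,q)) ≥ (1/2)·a(u,u) + (1/2)·β₀²·|p|_B² + c(p,p). -/

import Mathlib

/-- The coupled perturbed saddle-point bilinear form
`𝒜((u,p),(v,q)) = a(u,v) + b(v,p) + b(u,q) − c(p,q)`. -/
noncomputable def coupledForm {V Q : Type*} [AddCommGroup V] [Module ℝ V]
    [AddCommGroup Q] [Module ℝ Q]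
    (a : V →ₗ[ℝ] V →ₗ[ℝ] ℝ) (b : V →ₗ[ℝ] Q →ₗ[ℝ] ℝ) (c : Q →ₗ[ℝ] Q →ₗ[ℝ] ℝ)
    (x y : V × Q) : ℝ :=
  a x.1 y.1 + b y.1 x.2 + b x.1 y.2 - c x.2 y.2

/-!
Testing with `(u + w, -p)` cancels the two off-diagonal `b(u,p)` terms and turns `-c(p,-p)` into
`+c(p,p)`, leaving `a(u,u) + a(u,w) + b(w,p) + c(p,p)`. The cross term `a(u,w)` is absorbed by
Young's inequality `|a(u,w)| ≤ ½ a(u,u) + ½ a(w,w)`, which holds for every symmetric positive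
semidefinite form. For `w = β₀² v_p` the hypotheses on `v_p` give `b(w,p) = β₀² |p|_B²` and
`a(w,w) ≤ β₀² |p|_B²`, so half of `b(w,p)` survives.
-/

section

variable {V Q : Type*} [AddCommGroup V] [Module ℝ V] [AddCommGroup Q] [Module ℝ Q]

theorem neg_two_mul_le_add_of_symm_of_nonneg {a : V →ₗ[ℝ] V →ₗ[ℝ] ℝ}
    (ha_symm : ∀ u v : V, a u v = a v u) (ha_pos : ∀ u : V, 0 ≤ a u u) (u w : V) :
    -(2 * a u w) ≤ a u u + a w w := by
  have h := ha_pos (u + w)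
  simp only [map_add, LinearMap.add_apply, ha_symm w u] at h
  linarith

theorem coupledForm_add_neg (a : V →ₗ[ℝ] V →ₗ[ℝ] ℝ) (b : V →ₗ[ℝ] Q →ₗ[ℝ] ℝ)
    (c : Q →ₗ[ℝ] Q →ₗ[ℝ] ℝ) (u w : V) (p : Q) :
    coupledForm a b c (u, p) (u + w, -p) = a u u + a u w + b w p + c p p := by
  simp only [coupledForm, map_add, map_neg, LinearMap.add_apply]
  ring

theorem coupledForm_add_neg_ge {a : V →ₗ[ℝ] V →ₗ[ℝ] ℝ} (b : V →ₗ[ℝ] Q →ₗ[ℝ] ℝ)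
    (c : Q →ₗ[ℝ] Q →ₗ[ℝ] ℝ) (ha_symm : ∀ u v : V, a u v = a v u)
    (ha_pos : ∀ u : V, 0 ≤ a u u) (u w : V) (p : Q) :
    1 / 2 * a u u - 1 / 2 * a w w + b w p + c p p ≤
      coupledForm a b c (u, p) (u + w, -p) := by
  rw [coupledForm_add_neg]
  linarith [neg_two_mul_le_add_of_symm_of_nonneg ha_symm ha_pos u w]

end

theorem coupledForm_combined_test_lower_bound_general {V Q : Type*} [AddCommGroup V] [Module ℝ V]
    [AddCommGroup Q] [Module ℝ Q]
    (a : V →ₗ[ℝ] V →ₗ[ℝ] ℝ) (b : V →ₗ[ℝ] Q →ₗ[ℝ] ℝ) (c : Q →ₗ[ℝ] Q →ₗ[ℝ] ℝ)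
    (Bn : Seminorm ℝ Q) (β₀ : ℝ) (hβ₀ : 0 < β₀)
    (ha_symm : ∀ u v : V, a u v = a v u) (ha_pos : ∀ u : V, 0 ≤ a u u)
    (u : V) (p : Q) (vp : V)
    (hvp_b : b vp p = (Bn p) ^ 2)
    (hvp_a : a vp vp ≤ β₀⁻¹ ^ 2 * (Bn p) ^ 2) :
    coupledForm a b c (u, p) (u + β₀ ^ 2 • vp, -p) ≥
      1 / 2 * a u u + 1 / 2 * β₀ ^ 2 * (Bn p) ^ 2 + c p p := by
  have hvp_a' : β₀ ^ 2 * a vp vp ≤ Bn p ^ 2 :=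
    (le_inv_mul_iff₀ (by positivity)).1 (by rwa [inv_pow] at hvp_a)
  have h := coupledForm_add_neg_ge b c ha_symm ha_pos u (β₀ ^ 2 • vp) p
  simp only [map_smul, LinearMap.smul_apply, smul_eq_mul, hvp_b] at h
  linarith [mul_le_mul_of_nonneg_left hvp_a' (sq_nonneg β₀)]

/-- If `v_p` satisfies `b(v_p,p) = |p|_B²` and `a(v_p,v_p) ≤ β₀⁻² |p|_B²`, then the pair
`(v,q) := (u + β₀² v_p, −p)` satisfies
`𝒜((u,p),(v,q)) ≥ (1/2) a(u,u) + (1/2) β₀² |p|_B² + c(p,p)`. -/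
theorem coupledForm_combined_test_lower_bound {V Q : Type*} [AddCommGroup V] [Module ℝ V]
    [AddCommGroup Q] [Module ℝ Q]
    (a : V →ₗ[ℝ] V →ₗ[ℝ] ℝ) (b : V →ₗ[ℝ] Q →ₗ[ℝ] ℝ) (c : Q →ₗ[ℝ] Q →ₗ[ℝ] ℝ)
    (Bn : Seminorm ℝ Q) (β₀ : ℝ) (hβ₀ : 0 < β₀)
    (ha_symm : ∀ u v : V, a u v = a v u) (ha_pos : ∀ u : V, 0 ≤ a u u)
    (hc_symm : ∀ p q : Q, c p q = c q p) (hc_pos : ∀ q : Q, 0 ≤ c q q)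
    (u : V) (p : Q) (vp : V)
    (hvp_b : b vp p = (Bn p) ^ 2)
    (hvp_a : a vp vp ≤ β₀⁻¹ ^ 2 * (Bn p) ^ 2) :
    coupledForm a b c (u, p) (u + β₀ ^ 2 • vp, -p) ≥
      1 / 2 * a u u + 1 / 2 * β₀ ^ 2 * (Bn p) ^ 2 + c p p :=
  coupledForm_combined_test_lower_bound_general a b c Bn β₀ hβ₀ ha_symm ha_pos u p vp hvp_b hvp_a
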